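/- Transversal Clifford gates implement logical gates on encoded states: let n ≡ 1 (mod 4), let U be the n-qubit encoding unitary, let ψ be any 2×2 complex matrix, and let G ∈ {H, S}. Then G^{⊗n} · (U·(ψ ⊗ (I/2)^{⊗(n−1)})·U†) · (G^{⊗n})† = U·((G ψ G†) ⊗ (I/2)^{⊗(n−1)})·U†. -/

import Mathlib

/-!
The encoding unitary `U` permutes the computational basis by the invertible `𝔽₂`-linear map
`E f = f + (∑ⱼ fⱼ)·𝟙 + f₁·e₁`. Conjugation by `U` therefore turns `X` on qubit 1 (translation by
`e₁`) into translation by `E e₁ = 𝟙`, which is `X^{⊗n}`, and `Z` on qubit 1 (the sign `(-1)^{f₁}`)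
into the sign `(-1)^{∑ f}`, which is `Z^{⊗n}`, because `∑ (E f) = f₁` when `n` is odd.

Both sides of the claim, as functions of `ψ`, are linear and multiplicative, and `1, X, Z, XZ` span
the `2×2` matrices, so it suffices to compare them at `X` and `Z`. There both equal
`(G P G†)^{⊗n}`: for `H` because `H` swaps `X` and `Z`, for `S` because `S Z S† = Z` and
`S X S† = i·XZ` with `i^n = i` for `n ≡ 1 (mod 4)`.
-/

open Matrix

noncomputable section

/-- States of `n` qubits. -/
abbrev NState (n : ℕ) := Fin n → Fin 2

/-- Operators on `n` qubits. -/
abbrev NMat (n : ℕ) := Matrix (NState n) (NState n) ℂ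

/-- The Pauli `X` matrix. -/
def Xmat : Matrix (Fin 2) (Fin 2) ℂ := !![0, 1; 1, 0]

/-- The Pauli `Z` matrix. -/
def Zmat : Matrix (Fin 2) (Fin 2) ℂ := !![1, 0; 0, -1]

/-- The CNOT gate on `n` qubits with control qubit `c` and target qubit `t`:
the permutation matrix mapping the basis state `f` to `f` updated at `t` to
`f t + f c` (mod 2). -/
def nCNOT {n : ℕ} (c t : Fin n) : NMat n :=
  fun g f => if g = Function.update f t (f t + f c) then 1 else 0

/-- The `n`-qubit encoding unitary
`U = (C_{1→2}·C_{1→3} ⋯ C_{1→n})·(C_{2→1}·C_{3→1} ⋯ C_{n→1})` (qubits 1-indexed). -/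
def encU (n : ℕ) (hn : 0 < n) : NMat n :=
  (((List.finRange n).map fun j =>
      if j = ⟨0, hn⟩ then 1 else nCNOT ⟨0, hn⟩ j).prod) *
  (((List.finRange n).map fun j =>
      if j = ⟨0, hn⟩ then 1 else nCNOT j ⟨0, hn⟩).prod)

/-- `G ⊗ I^{⊗(n−1)}`: the single-qubit gate `G` acting on qubit 1, tensored with the
identity on qubits `2,…,n`. -/
def onFirst {n : ℕ} (hn : 0 < n) (G : Matrix (Fin 2) (Fin 2) ℂ) : NMat n :=
  fun g f => G (g ⟨0, hn⟩) (f ⟨0, hn⟩) *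
    (if ∀ j : Fin n, j ≠ ⟨0, hn⟩ → g j = f j then 1 else 0)

/-- `G^{⊗n}`: the `n`-fold Kronecker power of the single-qubit gate `G`. -/
def kronPow {n : ℕ} (G : Matrix (Fin 2) (Fin 2) ℂ) : NMat n :=
  fun g f => ∏ j : Fin n, G (g j) (f j)


/-- The Hadamard gate `H = (X + Z)/√2`. -/
def Hmat : Matrix (Fin 2) (Fin 2) ℂ := ((Real.sqrt 2 : ℂ))⁻¹ • (Xmat + Zmat)

/-- The phase gate `S`. -/
def Smat : Matrix (Fin 2) (Fin 2) ℂ := !![1, 0; 0, Complex.I]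

/-- `ψ ⊗ (I/2)^{⊗(n−1)}`: the single-qubit operator `ψ` on qubit 1 tensored with the
maximally mixed state on qubits `2,…,n`. -/
def mixExt (n : ℕ) (hn : 0 < n) (ψ : Matrix (Fin 2) (Fin 2) ℂ) : NMat n :=
  fun g f => ψ (g ⟨0, hn⟩) (f ⟨0, hn⟩) *
    (if ∀ j : Fin n, j ≠ ⟨0, hn⟩ → g j = f j then ((1 : ℂ) / 2) ^ (n - 1) else 0)

open Fin.CommRing Kronecker

lemma List.prod_map_one_add {R ι : Type*} [Semiring R] (l : List ι) (a : ι → R)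
    (h : ∀ i ∈ l, ∀ j ∈ l, a i * a j = 0) :
    (l.map fun i => 1 + a i).prod = 1 + (l.map a).sum := by
  induction l with
  | nil => simp
  | cons i l ih =>
    have hi : a i * (l.map a).sum = 0 := by
      rw [← List.sum_map_mul_left]
      exact List.sum_eq_zero fun x hx => by
        obtain ⟨j, hj, rfl⟩ := List.mem_map.mp hx
        exact h i List.mem_cons_self j (List.mem_cons_of_mem _ hj)
    rw [List.map_cons, List.prod_cons, ih fun j hj k hk =>
      h j (List.mem_cons_of_mem _ hj) k (List.mem_cons_of_mem _ hk)]
    simp only [List.map_cons, List.sum_cons, mul_add, add_mul, one_mul, mul_one, hi, add_zero,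
      add_assoc]

section SingleQubit

lemma Xmat_apply (x y : Fin 2) : Xmat x y = if x = y + 1 then 1 else 0 := by
  fin_cases x <;> fin_cases y <;> simp [Xmat]

lemma Zmat_apply (x y : Fin 2) : Zmat x y = if x = y then Zmat y y else 0 := by
  fin_cases x <;> fin_cases y <;> simp [Zmat]

lemma prod_Zmat_diag {ι : Type*} (s : Finset ι) (f : ι → Fin 2) :
    ∏ j ∈ s, Zmat (f j) (f j) = Zmat (∑ j ∈ s, f j) (∑ j ∈ s, f j) := by
  induction s using Finset.cons_induction with
  | empty => simp [Zmat]
  | cons a s _ ih =>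
    rw [Finset.prod_cons, Finset.sum_cons, ih]
    generalize f a = x, ∑ j ∈ s, f j = y
    fin_cases x <;> fin_cases y <;> simp [Zmat]

lemma Xmat_mul_self : Xmat * Xmat = 1 := by
  ext i j
  fin_cases i <;> fin_cases j <;> simp [Xmat, mul_apply, Fin.sum_univ_two, one_apply]

lemma pauli_decomposition (ψ : Matrix (Fin 2) (Fin 2) ℂ) :
    ∃ a b c d : ℂ, ψ = a • 1 + b • Xmat + c • Zmat + d • (Xmat * Zmat) :=
  ⟨(ψ 0 0 + ψ 1 1) / 2, (ψ 0 1 + ψ 1 0) / 2, (ψ 0 0 - ψ 1 1) / 2, (ψ 1 0 - ψ 0 1) / 2, by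
    ext i j
    fin_cases i <;> fin_cases j <;> simp [Xmat, Zmat] <;> ring⟩

lemma inv_sqrt_two_mul_self : ((Real.sqrt 2 : ℂ))⁻¹ * ((Real.sqrt 2 : ℂ))⁻¹ = 1 / 2 := by
  rw [← mul_inv, ← Complex.ofReal_mul, Real.mul_self_sqrt zero_le_two]
  norm_num

lemma Hmat_conjTranspose : Hmatᴴ = Hmat := by
  ext i j
  fin_cases i <;> fin_cases j <;> simp [Hmat, Xmat, Zmat]

lemma Hmat_conjTranspose_mul_self : Hmatᴴ * Hmat = 1 := by
  rw [Hmat_conjTranspose]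
  ext i j
  fin_cases i <;> fin_cases j <;>
    simp [Hmat, Xmat, Zmat, mul_apply, Fin.sum_univ_two, inv_sqrt_two_mul_self, one_apply] <;>
    norm_num

lemma Hmat_mul_Xmat_mul_conjTranspose : Hmat * Xmat * Hmatᴴ = Zmat := by
  rw [Hmat_conjTranspose]
  ext i j
  fin_cases i <;> fin_cases j <;>
    simp [Hmat, Xmat, Zmat, mul_apply, Fin.sum_univ_two, inv_sqrt_two_mul_self] <;> norm_num

lemma Hmat_mul_Zmat_mul_conjTranspose : Hmat * Zmat * Hmatᴴ = Xmat := by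
  rw [Hmat_conjTranspose]
  ext i j
  fin_cases i <;> fin_cases j <;>
    simp [Hmat, Xmat, Zmat, mul_apply, Fin.sum_univ_two, inv_sqrt_two_mul_self] <;> norm_num

lemma Smat_conjTranspose_mul_self : Smatᴴ * Smat = 1 := by
  ext i j
  fin_cases i <;> fin_cases j <;> simp [Smat, mul_apply, Fin.sum_univ_two, one_apply]

lemma Smat_mul_Xmat_mul_conjTranspose : Smat * Xmat * Smatᴴ = Complex.I • (Xmat * Zmat) := by
  ext i j
  fin_cases i <;> fin_cases j <;> simp [Smat, Xmat, Zmat, mul_apply, Fin.sum_univ_two]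

lemma Smat_mul_Zmat_mul_conjTranspose : Smat * Zmat * Smatᴴ = Zmat := by
  ext i j
  fin_cases i <;> fin_cases j <;> simp [Smat, Zmat, mul_apply, Fin.sum_univ_two]

end SingleQubit

section Encoding

variable {n : ℕ}

section BasisPermutations

def shiftMat (v : NState n) : NMat n := of fun g f => if g = f + v then 1 else 0

def linPerm : Matrix (Fin n) (Fin n) (Fin 2) →* NMat n where
  toFun M := of fun g f => if g = M *ᵥ f then 1 else 0
  map_one' := by
    ext g f
    simp [one_apply, one_mulVec]
  map_mul' M N := by
    ext g f
    simp [mul_apply, ← mulVec_mulVec]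

lemma linPerm_apply (M : Matrix (Fin n) (Fin n) (Fin 2)) (g f : NState n) :
    linPerm M g f = if g = M *ᵥ f then 1 else 0 := rfl

lemma linPerm_mem_unitary {N : Matrix (Fin n) (Fin n) (Fin 2)} (hN : N * N = 1) :
    linPerm N ∈ unitary (NMat n) := by
  have hinv : ∀ v, N *ᵥ (N *ᵥ v) = v := fun v => by rw [mulVec_mulVec, hN, one_mulVec]
  have hstar : star (linPerm N) = linPerm N := by
    ext g f
    rw [star_eq_conjTranspose, conjTranspose_apply, linPerm_apply, linPerm_apply]
    by_cases h : g = N *ᵥ f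
    · simp [h, hinv]
    · have h' : f ≠ N *ᵥ g := fun h' => h (by rw [h', hinv])
      simp [h, h']
  rw [Unitary.mem_iff, hstar, ← map_mul, hN, map_one]
  exact ⟨rfl, rfl⟩

lemma linPerm_mul_shiftMat (M : Matrix (Fin n) (Fin n) (Fin 2)) (v : NState n) :
    linPerm M * shiftMat v = shiftMat (M *ᵥ v) * linPerm M := by
  ext g f
  simp [mul_apply, linPerm_apply, shiftMat, mulVec_add]

lemma linPerm_mul_diagonal (M : Matrix (Fin n) (Fin n) (Fin 2)) {d d' : NState n → ℂ}
    (h : ∀ f, d' (M *ᵥ f) = d f) :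
    linPerm M * diagonal d = diagonal d' * linPerm M := by
  ext g f
  by_cases hg : g = M *ᵥ f <;> simp [linPerm_apply, hg, h]

end BasisPermutations

section KronPow

lemma kronPow_mul (A B : Matrix (Fin 2) (Fin 2) ℂ) :
    kronPow (n := n) (A * B) = kronPow A * kronPow B := by
  ext g f
  simp only [kronPow, mul_apply, Fintype.prod_sum, Finset.prod_mul_distrib]

lemma kronPow_one : kronPow (n := n) (1 : Matrix (Fin 2) (Fin 2) ℂ) = 1 := by
  ext g f
  simp [kronPow, one_apply, Fintype.prod_boole, funext_iff]

lemma kronPow_smul (c : ℂ) (A : Matrix (Fin 2) (Fin 2) ℂ) :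
    kronPow (n := n) (c • A) = c ^ n • kronPow A := by
  ext g f
  simp [kronPow, Finset.prod_mul_distrib]

lemma kronPow_conjTranspose (A : Matrix (Fin 2) (Fin 2) ℂ) :
    kronPow (n := n) Aᴴ = (kronPow A)ᴴ := by
  ext g f
  simp [kronPow, conjTranspose_apply]

lemma kronPow_Xmat : kronPow (n := n) Xmat = shiftMat 1 := by
  ext g f
  simp [kronPow, shiftMat, Xmat_apply, Fintype.prod_boole, funext_iff]

lemma kronPow_Zmat : kronPow (n := n) Zmat = diagonal fun f => Zmat (∑ j, f j) (∑ j, f j) := by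
  ext g f
  rw [kronPow, diagonal_apply]
  simp only [Zmat_apply (g _), Fintype.prod_ite_zero, prod_Zmat_diag, ← funext_iff]
  split_ifs with h <;> simp [h]

end KronPow

section OnFirst

lemma onFirst_eq_submatrix (hn : 0 < n) (A : Matrix (Fin 2) (Fin 2) ℂ) :
    onFirst hn A = (A ⊗ₖ (1 : Matrix ({j // j ≠ (⟨0, hn⟩ : Fin n)} → Fin 2) _ ℂ)).submatrix
      (Equiv.piSplitAt (⟨0, hn⟩ : Fin n) fun _ => Fin 2)
      (Equiv.piSplitAt (⟨0, hn⟩ : Fin n) fun _ => Fin 2) := by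
  ext g f
  simp [onFirst, one_apply, funext_iff]

lemma onFirst_mul (hn : 0 < n) (A B : Matrix (Fin 2) (Fin 2) ℂ) :
    onFirst hn (A * B) = onFirst hn A * onFirst hn B := by
  simp only [onFirst_eq_submatrix, submatrix_mul_equiv, ← mul_kronecker_mul, one_mul]

lemma onFirst_add (hn : 0 < n) (A B : Matrix (Fin 2) (Fin 2) ℂ) :
    onFirst hn (A + B) = onFirst hn A + onFirst hn B := by
  ext g f
  simp only [onFirst, Matrix.add_apply, add_mul]

lemma onFirst_smul (hn : 0 < n) (c : ℂ) (A : Matrix (Fin 2) (Fin 2) ℂ) :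
    onFirst hn (c • A) = c • onFirst hn A := by
  ext g f
  simp only [onFirst, Matrix.smul_apply, smul_eq_mul, mul_assoc]

lemma mixExt_eq_smul_onFirst (hn : 0 < n) (ψ : Matrix (Fin 2) (Fin 2) ℂ) :
    mixExt n hn ψ = ((1 : ℂ) / 2) ^ (n - 1) • onFirst hn ψ := by
  ext g f
  simp [mixExt, onFirst, mul_comm]

lemma onFirst_Xmat (hn : 0 < n) : onFirst hn Xmat = shiftMat (Pi.single ⟨0, hn⟩ 1) := by
  ext g f
  have key : (g ⟨0, hn⟩ = f ⟨0, hn⟩ + 1 ∧ ∀ j, j ≠ ⟨0, hn⟩ → g j = f j) ↔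
      g = f + Pi.single ⟨0, hn⟩ 1 := by
    simp only [funext_iff, Pi.add_apply, Pi.single_apply]
    constructor
    · rintro ⟨h0, h⟩ j
      by_cases hj : j = ⟨0, hn⟩ <;> simp_all
    · intro h
      exact ⟨by simpa using h ⟨0, hn⟩, fun j hj => by simpa [hj] using h j⟩
  simp only [onFirst, shiftMat, Xmat_apply, of_apply, ← key]
  split_ifs <;> simp_all

lemma onFirst_Zmat (hn : 0 < n) :
    onFirst hn Zmat = diagonal fun f => Zmat (f ⟨0, hn⟩) (f ⟨0, hn⟩) := by
  ext g f
  by_cases h : g = f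
  · simp [h, onFirst]
  · have hz : ¬(g ⟨0, hn⟩ = f ⟨0, hn⟩ ∧ ∀ j, j ≠ ⟨0, hn⟩ → g j = f j) := fun ⟨h0, h1⟩ =>
      h (funext fun j => if hj : j = ⟨0, hn⟩ then hj ▸ h0 else h1 j hj)
    rw [diagonal_apply_ne _ h, onFirst, Zmat_apply]
    split_ifs <;> simp_all

end OnFirst

section Encoder

lemma nCNOT_eq_linPerm (c t : Fin n) : nCNOT c t = linPerm (1 + single t c 1) := by
  have h : ∀ f : NState n, Function.update f t (f t + f c) = (1 + single t c 1) *ᵥ f := by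
    intro f
    ext k
    by_cases hk : k = t <;> simp [hk, add_mulVec, single_mulVec, one_mulVec]
  ext g f
  rw [linPerm_apply, ← h]
  rfl

lemma nCNOT_mem_unitary {c t : Fin n} (h : c ≠ t) : nCNOT c t ∈ unitary (NMat n) := by
  refine nCNOT_eq_linPerm c t ▸ linPerm_mem_unitary ?_
  simp only [add_mul, mul_add, mul_one, one_mul, single_mul_single_of_ne _ t c t h, add_zero]
  rw [add_assoc, ← single_add, CharTwo.add_self_eq_zero, single_zero, add_zero]

lemma encU_mem_unitary (hn : 0 < n) : encU n hn ∈ unitary (NMat n) := by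
  refine mul_mem (list_prod_mem ?_) (list_prod_mem ?_) <;> simp only [List.mem_map] <;>
    rintro _ ⟨j, -, rfl⟩ <;> split_ifs with hj
  exacts [one_mem _, nCNOT_mem_unitary (Ne.symm hj), one_mem _, nCNOT_mem_unitary hj]

def fanOutMat (z : Fin n) : Matrix (Fin n) (Fin n) (Fin 2) :=
  ∑ j ∈ Finset.univ.erase z, single j z 1

def collectMat (z : Fin n) : Matrix (Fin n) (Fin n) (Fin 2) :=
  ∑ j ∈ Finset.univ.erase z, single z j 1

def encMat (z : Fin n) : Matrix (Fin n) (Fin n) (Fin 2) := (1 + fanOutMat z) * (1 + collectMat z)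

lemma prod_finRange_eq_linPerm (z : Fin n) (c : Fin n → NMat n)
    (a : Fin n → Matrix (Fin n) (Fin n) (Fin 2)) (hc : ∀ j, j ≠ z → c j = linPerm (1 + a j))
    (ha : ∀ i j, i ≠ z → j ≠ z → a i * a j = 0) :
    ((List.finRange n).map fun j => if j = z then 1 else c j).prod
      = linPerm (1 + ∑ j ∈ Finset.univ.erase z, a j) := by
  have hfac : ∀ j, (if j = z then 1 else c j) = linPerm (1 + if j = z then 0 else a j) := by
    intro j
    split_ifs with hj
    · simp
    · exact hc j hj
  simp only [hfac]
  refine (List.prod_map_hom _ (fun j => 1 + if j = z then 0 else a j) linPerm).trans ?_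
  rw [List.prod_map_one_add, ← Fin.sum_univ_def,
    Finset.sum_ite, Finset.sum_const_zero, zero_add, Finset.filter_ne']
  intro i _ j _
  split_ifs with hi hj hj
  exacts [zero_mul _, zero_mul _, mul_zero _, ha i j hi hj]

lemma encU_eq_linPerm (hn : 0 < n) : encU n hn = linPerm (encMat ⟨0, hn⟩) := by
  rw [encMat, map_mul, encU, fanOutMat, collectMat,
    prod_finRange_eq_linPerm _ _ _ (fun j _ => nCNOT_eq_linPerm _ j)
      (fun _ _ _ hj => single_mul_single_of_ne _ _ _ _ (Ne.symm hj) _),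
    prod_finRange_eq_linPerm _ _ _ (fun j _ => nCNOT_eq_linPerm j _)
      (fun _ _ hi _ => single_mul_single_of_ne _ _ _ _ hi _)]

lemma fanOutMat_mulVec (z : Fin n) (v : NState n) :
    fanOutMat z *ᵥ v = fun k => if k = z then 0 else v z := by
  funext k
  rw [fanOutMat, sum_mulVec, Finset.sum_apply]
  simp only [single_mulVec, Function.update_apply, one_mul, Pi.zero_apply, Finset.sum_ite_eq,
    Finset.mem_erase]
  by_cases hk : k = z <;> simp [hk]

lemma collectMat_mulVec (z : Fin n) (v : NState n) :
    collectMat z *ᵥ v = Pi.single z (∑ j ∈ Finset.univ.erase z, v j) := by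
  funext k
  rw [collectMat, sum_mulVec, Finset.sum_apply]
  simp only [single_mulVec, Function.update_apply, one_mul, Pi.zero_apply]
  by_cases hk : k = z <;> simp [hk]

lemma encMat_mulVec (z : Fin n) (f : NState n) :
    encMat z *ᵥ f = f + (fun _ => ∑ j, f j) + Pi.single z (f z) := by
  rw [encMat, ← mulVec_mulVec, add_mulVec, one_mulVec, add_mulVec, one_mulVec, collectMat_mulVec,
    fanOutMat_mulVec, ← Finset.add_sum_erase _ _ (Finset.mem_univ z)]
  funext k
  by_cases hk : k = z
  · subst hk
    simp only [Pi.add_apply, Pi.single_eq_same]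
    grind
  · simp [hk]

lemma encMat_mulVec_single (z : Fin n) : encMat z *ᵥ Pi.single z 1 = 1 := by
  rw [encMat_mulVec]
  funext k
  by_cases hk : k = z <;> simp [hk]

lemma sum_encMat_mulVec (hn : Odd n) (z : Fin n) (f : NState n) :
    ∑ k, (encMat z *ᵥ f) k = f z := by
  simp [encMat_mulVec, Finset.sum_add_distrib, nsmul_eq_mul, CharTwo.natCast_eq_ite,
    Nat.not_even_iff_odd.mpr hn, CharTwo.add_self_eq_zero]

lemma encU_mul_onFirst_Xmat (hn : 0 < n) :
    encU n hn * onFirst hn Xmat = kronPow Xmat * encU n hn := by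
  rw [encU_eq_linPerm, onFirst_Xmat, kronPow_Xmat, linPerm_mul_shiftMat, encMat_mulVec_single]

lemma encU_mul_onFirst_Zmat (hodd : Odd n) (hn : 0 < n) :
    encU n hn * onFirst hn Zmat = kronPow Zmat * encU n hn := by
  rw [encU_eq_linPerm, onFirst_Zmat, kronPow_Zmat]
  exact linPerm_mul_diagonal _ fun f => by rw [sum_encMat_mulVec hodd]

end Encoder

section LogicalOp

def logicalOp (hn : 0 < n) (A : Matrix (Fin 2) (Fin 2) ℂ) : NMat n :=
  encU n hn * onFirst hn A * (encU n hn)ᴴ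

lemma encU_conj_mixExt (hn : 0 < n) (ψ : Matrix (Fin 2) (Fin 2) ℂ) :
    encU n hn * mixExt n hn ψ * (encU n hn)ᴴ = ((1 : ℂ) / 2) ^ (n - 1) • logicalOp hn ψ := by
  rw [mixExt_eq_smul_onFirst, Matrix.mul_smul, Matrix.smul_mul, logicalOp]

lemma logicalOp_mul (hn : 0 < n) (A B : Matrix (Fin 2) (Fin 2) ℂ) :
    logicalOp hn (A * B) = logicalOp hn A * logicalOp hn B := by
  have hU : (encU n hn)ᴴ * encU n hn = 1 := Unitary.star_mul_self_of_mem (encU_mem_unitary hn)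
  simp only [logicalOp, onFirst_mul, Matrix.mul_assoc, ← Matrix.mul_assoc (encU n hn)ᴴ, hU,
    Matrix.one_mul]

lemma logicalOp_add (hn : 0 < n) (A B : Matrix (Fin 2) (Fin 2) ℂ) :
    logicalOp hn (A + B) = logicalOp hn A + logicalOp hn B := by
  simp only [logicalOp, onFirst_add, Matrix.mul_add, Matrix.add_mul]

lemma logicalOp_smul (hn : 0 < n) (c : ℂ) (A : Matrix (Fin 2) (Fin 2) ℂ) :
    logicalOp hn (c • A) = c • logicalOp hn A := by
  simp only [logicalOp, onFirst_smul, Matrix.mul_smul, Matrix.smul_mul]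

lemma logicalOp_eq_kronPow (hn : 0 < n) {A : Matrix (Fin 2) (Fin 2) ℂ}
    (h : encU n hn * onFirst hn A = kronPow A * encU n hn) : logicalOp hn A = kronPow A := by
  have hU : encU n hn * (encU n hn)ᴴ = 1 := Unitary.mul_star_self_of_mem (encU_mem_unitary hn)
  rw [logicalOp, h, Matrix.mul_assoc, hU, Matrix.mul_one]

lemma logicalOp_Xmat (hn : 0 < n) : logicalOp hn Xmat = kronPow Xmat :=
  logicalOp_eq_kronPow hn (encU_mul_onFirst_Xmat hn)

lemma logicalOp_Zmat (hodd : Odd n) (hn : 0 < n) : logicalOp hn Zmat = kronPow Zmat :=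
  logicalOp_eq_kronPow hn (encU_mul_onFirst_Zmat hodd hn)

lemma kronPow_conj_logicalOp (hodd : Odd n) (hn : 0 < n) {G : Matrix (Fin 2) (Fin 2) ℂ}
    (hG : Gᴴ * G = 1) (hX : logicalOp hn (G * Xmat * Gᴴ) = kronPow (G * Xmat * Gᴴ))
    (hZ : logicalOp hn (G * Zmat * Gᴴ) = kronPow (G * Zmat * Gᴴ))
    (ψ : Matrix (Fin 2) (Fin 2) ℂ) :
    kronPow G * logicalOp hn ψ * (kronPow G)ᴴ = logicalOp hn (G * ψ * Gᴴ) := by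
  set K : NMat n := kronPow G
  have hK : Kᴴ * K = 1 := by rw [← kronPow_conjTranspose, ← kronPow_mul, hG, kronPow_one]
  let P (A : Matrix (Fin 2) (Fin 2) ℂ) : Prop :=
    K * logicalOp hn A * Kᴴ = logicalOp hn (G * A * Gᴴ)
  have of_transversal (A : Matrix (Fin 2) (Fin 2) ℂ) (hA : logicalOp hn A = kronPow A)
      (hGA : logicalOp hn (G * A * Gᴴ) = kronPow (G * A * Gᴴ)) : P A := by
    simp only [P, K, hA, hGA, ← kronPow_conjTranspose, ← kronPow_mul]
  have mul (A B : Matrix (Fin 2) (Fin 2) ℂ) (hA : P A) (hB : P B) : P (A * B) := by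
    simp only [P] at hA hB ⊢
    calc K * logicalOp hn (A * B) * Kᴴ
        = (K * logicalOp hn A * Kᴴ) * (K * logicalOp hn B * Kᴴ) := by
          simp only [logicalOp_mul, Matrix.mul_assoc, ← Matrix.mul_assoc Kᴴ, hK, Matrix.one_mul]
      _ = logicalOp hn (G * A * Gᴴ * (G * B * Gᴴ)) := by rw [hA, hB, ← logicalOp_mul]
      _ = logicalOp hn (G * (A * B) * Gᴴ) := by
          simp only [Matrix.mul_assoc, ← Matrix.mul_assoc Gᴴ, hG, Matrix.one_mul]
  have add (A B : Matrix (Fin 2) (Fin 2) ℂ) (hA : P A) (hB : P B) : P (A + B) := by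
    simp only [P, logicalOp_add, Matrix.mul_add, Matrix.add_mul, hA, hB]
  have smul (c : ℂ) (A : Matrix (Fin 2) (Fin 2) ℂ) (hA : P A) : P (c • A) := by
    simp only [P, logicalOp_smul, Matrix.mul_smul, Matrix.smul_mul, hA]
  have hPX : P Xmat := of_transversal _ (logicalOp_Xmat hn) hX
  have hPZ : P Zmat := of_transversal _ (logicalOp_Zmat hodd hn) hZ
  have hP1 : P 1 := by simpa only [Xmat_mul_self] using mul _ _ hPX hPX
  obtain ⟨a, b, c, d, rfl⟩ := pauli_decomposition ψ
  exact add _ _ (add _ _ (add _ _ (smul _ _ hP1) (smul _ _ hPX)) (smul _ _ hPZ))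
    (smul _ _ (mul _ _ hPX hPZ))

end LogicalOp

end Encoding

/-- **Transversal Clifford gates implement logical gates on encoded states.**
For `n ≡ 1 (mod 4)` positive, the `n`-qubit encoding unitary `U`, any 2×2 complex matrix
`ψ`, and `G ∈ {H, S}`:
`G^{⊗n} · (U·(ψ ⊗ (I/2)^{⊗(n−1)})·U†) · (G^{⊗n})† = U·((G ψ G†) ⊗ (I/2)^{⊗(n−1)})·U†`. -/
theorem transversal_clifford_logical (n : ℕ) (hn : 0 < n) (h4 : n % 4 = 1)
    (ψ : Matrix (Fin 2) (Fin 2) ℂ) (G : Matrix (Fin 2) (Fin 2) ℂ)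
    (hG : G = Hmat ∨ G = Smat) :
    kronPow (n := n) G * (encU n hn * mixExt n hn ψ * (encU n hn)ᴴ) *
        (kronPow (n := n) G)ᴴ =
      encU n hn * mixExt n hn (G * ψ * Gᴴ) * (encU n hn)ᴴ := by
  have hodd : Odd n := Nat.odd_iff.mpr (by omega)
  have hI : Complex.I ^ n = Complex.I := by rw [Complex.I_pow_eq_pow_mod, h4, pow_one]
  have key : kronPow G * logicalOp hn ψ * (kronPow G)ᴴ = logicalOp hn (G * ψ * Gᴴ) := by
    rcases hG with rfl | rfl
    · refine kronPow_conj_logicalOp hodd hn Hmat_conjTranspose_mul_self ?_ ?_ ψ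
      · rw [Hmat_mul_Xmat_mul_conjTranspose, logicalOp_Zmat hodd]
      · rw [Hmat_mul_Zmat_mul_conjTranspose, logicalOp_Xmat]
    · refine kronPow_conj_logicalOp hodd hn Smat_conjTranspose_mul_self ?_ ?_ ψ
      · rw [Smat_mul_Xmat_mul_conjTranspose, logicalOp_smul, kronPow_smul, hI, logicalOp_mul,
          kronPow_mul, logicalOp_Xmat, logicalOp_Zmat hodd]
      · rw [Smat_mul_Zmat_mul_conjTranspose, logicalOp_Zmat hodd]
  rw [encU_conj_mixExt, encU_conj_mixExt, Matrix.mul_smul, Matrix.smul_mul, key]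

end
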